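/- For every STI derivation Π and every natural number r ≥ 1, W(Π, r) ≤ r^{d(Π)} · W(Π, 1), where W(Π, r) is the weight of Π with respect to r and d(Π) is the degree of Π. -/

import Mathlib

/-- λ-terms with named variables. -/
inductive Tm : Type where
  | var : ℕ → Tm
  | app : Tm → Tm → Tm
  | lam : ℕ → Tm → Tm
deriving DecidableEq

/-- Size of a term: |x|=1, |MN|=|M|+|N|+1, |λx.M|=|M|+1. -/
def tmSize : Tm → ℕ
  | .var _ => 1
  | .app M N => tmSize M + tmSize N + 1
  | .lam _ M => tmSize M + 1

/-- Free variables. -/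
def FV : Tm → Finset ℕ
  | .var x => {x}
  | .app M N => FV M ∪ FV N
  | .lam x M => FV M \ {x}

/-- Substitution M[N/x]. -/
def subst : Tm → ℕ → Tm → Tm
  | .var y, x, N => if y = x then N else .var y
  | .app P Q, x, N => .app (subst P x N) (subst Q x N)
  | .lam y P, x, N => if y = x then .lam y P else .lam y (subst P x N)

/-- Rename free occurrences of y to x. -/
def rename : Tm → ℕ → ℕ → Tm
  | .var z, y, x => if z = y then .var x else .var z
  | .app P Q, y, x => .app (rename P y x) (rename Q y x)
  | .lam z P, y, x => if z = y then .lam z P else .lam z (rename P y x)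

/-- Rename each of the variables xs i to x. -/
def renameAll {n : ℕ} (xs : Fin n → ℕ) (x : ℕ) (M : Tm) : Tm :=
  (List.ofFn xs).foldl (fun t y => rename t y x) M

/-- One step of β-reduction (contextual closure of (λx.M)N → M[N/x]). -/
inductive Step : Tm → Tm → Prop where
  | beta (x : ℕ) (M N : Tm) : Step (.app (.lam x M) N) (subst M x N)
  | appL {M M' : Tm} (N : Tm) : Step M M' → Step (.app M N) (.app M' N)
  | appR (M : Tm) {N N' : Tm} : Step N N' → Step (.app M N) (.app M N')
  | lam (x : ℕ) {M M' : Tm} : Step M M' → Step (.lam x M) (.lam x M')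

/-- n-step reduction sequences. -/
inductive Steps : ℕ → Tm → Tm → Prop where
  | refl (M : Tm) : Steps 0 M M
  | head {M M' M'' : Tm} {n : ℕ} : Step M M' → Steps n M' M'' → Steps (n+1) M M''

/-- Strong normalization: every reduction sequence from M is finite. -/
def SN (M : Tm) : Prop := Acc (fun a b => Step b a) M

mutual
/-- Linear types A ::= a | σ → A. -/
inductive LTy : Type where
  | tvar : ℕ → LTy
  | arrow : ITy → LTy → LTy
/-- Intersection types σ ::= A | σ₁ ∧ σ₂ ∧ ... ∧ σₙ (n > 1): an intersection
carries two first components plus a (possibly empty) list of further components,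
so it always has ≥ 2 components.  ∧ is non-idempotent and non-associative. -/
inductive ITy : Type where
  | lin : LTy → ITy
  | inter : ITy → ITy → List ITy → ITy
end

/-- The list of components of an intersection σ₁ ∧ ... ∧ σₙ. -/
def ITy.components (σ₁ σ₂ : ITy) (rest : List ITy) : List ITy := σ₁ :: σ₂ :: rest

mutual
/-- Number of elements of a type. -/
def nelem : ITy → ℕ
  | .lin _ => 1
  | .inter σ₁ σ₂ rest => nelem σ₁ + nelem σ₂ + nelemList rest
def nelemList : List ITy → ℕ
  | [] => 0
  | σ :: l => nelem σ + nelemList l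
end

/-- Contexts: partial maps from variables to intersection types. -/
def Ctx : Type := ℕ → Option ITy

def Ctx.dom (Γ : Ctx) : Set ℕ := {x | Γ x ≠ none}
def Ctx.empty : Ctx := fun _ => none
def Ctx.update (Γ : Ctx) (x : ℕ) (σ : ITy) : Ctx := Function.update Γ x (some σ)
/-- Union of contexts (used for disjoint contexts Γ, Δ). -/
def Ctx.union (Γ Δ : Ctx) : Ctx := fun y => (Γ y).orElse (fun _ => Δ y)
/-- Binary intersection of types. -/
def ITy.wedge (σ τ : ITy) : ITy := .inter σ τ []
/-- Intersection Γ ∧ Δ of contexts. -/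
def Ctx.wedge (Γ Δ : Ctx) : Ctx := fun y =>
  match Γ y, Δ y with
  | some σ, some τ => some (σ.wedge τ)
  | some σ, none => some σ
  | none, o => o
def Ctx.wedgeAll {n : ℕ} (Γs : Fin n → Ctx) : Ctx :=
  (List.ofFn Γs).foldr Ctx.wedge Ctx.empty
def Ctx.extendList (Γ : Ctx) : List (ℕ × ITy) → Ctx
  | [] => Γ
  | p :: rest => (Ctx.extendList Γ rest).update p.1 p.2

/-- The type assignment system STI. -/
inductive Der : Ctx → Tm → ITy → Type where
  | ax (x : ℕ) (A : LTy) :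
      Der (Ctx.empty.update x (.lin A)) (.var x) (.lin A)
  | weak {Γ : Ctx} {M : Tm} {σ : ITy} (x : ℕ) (A : LTy) (hx : x ∉ Γ.dom) :
      Der Γ M σ → Der (Γ.update x (.lin A)) M σ
  | lamI {Γ : Ctx} {x : ℕ} {σ : ITy} {M : Tm} {A : LTy} (hx : x ∉ Γ.dom) :
      Der (Γ.update x σ) M (.lin A) → Der Γ (.lam x M) (.lin (.arrow σ A))
  | appE {Γ Δ : Ctx} {M N : Tm} {σ : ITy} {A : LTy} (h : Disjoint Γ.dom Δ.dom) :
      Der Γ M (.lin (.arrow σ A)) → Der Δ N σ → Der (Γ.union Δ) (.app M N) (.lin A)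
  | inter {M : Tm} (σ₁ σ₂ : ITy) (rest : List ITy)
      (Γs : Fin (rest.length + 2) → Ctx)
      (prems : (i : Fin (rest.length + 2)) → Der (Γs i) M ((ITy.components σ₁ σ₂ rest).get i)) :
      Der (Ctx.wedgeAll Γs) M (.inter σ₁ σ₂ rest)
  | mux {Γ : Ctx} {M : Tm} {τ : ITy} (x : ℕ) (σ₁ σ₂ : ITy) (rest : List ITy)
      (xs : Fin (rest.length + 2) → ℕ)
      (hinj : Function.Injective xs) (hfresh : ∀ i, xs i ∉ Γ.dom) (hx : x ∉ Γ.dom) :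
      Der (Γ.extendList (List.ofFn fun i => (xs i, (ITy.components σ₁ σ₂ rest).get i))) M τ →
      Der (Γ.update x (.inter σ₁ σ₂ rest)) (renameAll xs x M) τ

/-- Size of a derivation. -/
def Der.size : ∀ {Γ M σ}, Der Γ M σ → ℕ
  | _, _, _, .ax _ _ => 1
  | _, _, _, .weak _ _ _ d => d.size + 1
  | _, _, _, .lamI _ d => d.size + 1
  | _, _, _, .appE _ d₁ d₂ => d₁.size + d₂.size + 1
  | _, _, _, .inter _ _ _ _ prems => (∑ i, (prems i).size) + 1
  | _, _, _, .mux _ _ _ _ _ _ _ _ d => d.size + 1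

/-- Degree: maximal nesting of (∧ₙ) rules. -/
def Der.degree : ∀ {Γ M σ}, Der Γ M σ → ℕ
  | _, _, _, .ax _ _ => 0
  | _, _, _, .weak _ _ _ d => d.degree
  | _, _, _, .lamI _ d => d.degree
  | _, _, _, .appE _ d₁ d₂ => max d₁.degree d₂.degree
  | _, _, _, .inter _ _ _ _ prems => (Finset.univ.sup fun i => (prems i).degree) + 1
  | _, _, _, .mux _ _ _ _ _ _ _ _ d => d.degree

/-- Rank: max of 1 and the ranks of all (m) rules (number of contracted
variables actually free in the subject of the premise). -/
def Der.rank : ∀ {Γ M σ}, Der Γ M σ → ℕ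
  | _, _, _, .ax _ _ => 1
  | _, _, _, .weak _ _ _ d => d.rank
  | _, _, _, .lamI _ d => d.rank
  | _, _, _, .appE _ d₁ d₂ => max d₁.rank d₂.rank
  | _, _, _, .inter _ _ _ _ prems => Finset.univ.sup fun i => (prems i).rank
  | _, _, _, @Der.mux _ M _ _ _ _ _ xs _ _ _ d =>
      max d.rank ((Finset.univ.filter fun i => xs i ∈ FV M).card)

/-- Weight of a derivation with respect to r. -/
def Der.weight (r : ℕ) : ∀ {Γ M σ}, Der Γ M σ → ℕ
  | _, _, _, .ax _ _ => 1
  | _, _, _, .weak _ _ _ d => d.weight r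
  | _, _, _, .lamI _ d => d.weight r + 1
  | _, _, _, .appE _ d₁ d₂ => d₁.weight r + d₂.weight r + 1
  | _, _, _, .inter _ _ _ _ prems => r * Finset.univ.sup fun i => (prems i).weight r
  | _, _, _, .mux _ _ _ _ _ _ _ _ d => d.weight r

/- Each rule other than (∧ₙ) adds at most 1 to the weight, which can be absorbed into the factor
`r ^ d ≥ 1`; each (∧ₙ) multiplies the weight by `r` and raises the degree by one. Scaling the
weight parameter by `r` therefore costs at most a factor `r ^ d(Π)`. -/

lemma le_pow_mul_of_le_pow_mul {a b r d e : ℕ} (hr : 1 ≤ r) (hde : d ≤ e) (h : a ≤ r ^ d * b) :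
    a ≤ r ^ e * b :=
  h.trans (Nat.mul_le_mul_right b (Nat.pow_le_pow_right hr hde))

lemma add_one_le_pow_mul_add_one {a b r d : ℕ} (hr : 1 ≤ r) (h : a ≤ r ^ d * b) :
    a + 1 ≤ r ^ d * (b + 1) := by
  rw [mul_add_one]
  exact Nat.add_le_add h (Nat.one_le_pow d r hr)

lemma Finset.sup_le_pow_sup_mul_sup {ι : Type*} (s : Finset ι) {r : ℕ} (hr : 1 ≤ r)
    {a b d : ι → ℕ} (h : ∀ i ∈ s, a i ≤ r ^ d i * b i) :
    s.sup a ≤ r ^ s.sup d * s.sup b :=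
  Finset.sup_le fun i hi =>
    le_pow_mul_of_le_pow_mul hr (Finset.le_sup hi)
      ((h i hi).trans (Nat.mul_le_mul_left _ (Finset.le_sup (f := b) hi)))

theorem Der.weight_mul_le_pow_degree_mul {r : ℕ} (hr : 1 ≤ r) (s : ℕ) :
    ∀ {Γ : Ctx} {M : Tm} {σ : ITy} (P : Der Γ M σ),
      P.weight (r * s) ≤ r ^ P.degree * P.weight s
  | _, _, _, .ax _ _ => by simp [weight, degree]
  | _, _, _, .weak _ _ _ P => weight_mul_le_pow_degree_mul hr s P
  | _, _, _, .mux _ _ _ _ _ _ _ _ P => weight_mul_le_pow_degree_mul hr s P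
  | _, _, _, .lamI _ P =>
    add_one_le_pow_mul_add_one hr (weight_mul_le_pow_degree_mul hr s P)
  | _, _, _, .appE _ P Q => by
    have hP := le_pow_mul_of_le_pow_mul hr (le_max_left P.degree Q.degree)
      (weight_mul_le_pow_degree_mul hr s P)
    have hQ := le_pow_mul_of_le_pow_mul hr (le_max_right P.degree Q.degree)
      (weight_mul_le_pow_degree_mul hr s Q)
    exact add_one_le_pow_mul_add_one hr ((Nat.add_le_add hP hQ).trans_eq (mul_add _ _ _).symm)
  | _, _, _, .inter _ _ _ _ prems => by
    have hsup := Finset.univ.sup_le_pow_sup_mul_sup hr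
      fun i _ => weight_mul_le_pow_degree_mul hr s (prems i)
    calc r * s * Finset.univ.sup (fun i => (prems i).weight (r * s))
        ≤ r * s * (r ^ Finset.univ.sup (fun i => (prems i).degree)
            * Finset.univ.sup fun i => (prems i).weight s) := Nat.mul_le_mul_left _ hsup
      _ = r ^ (Finset.univ.sup (fun i => (prems i).degree) + 1)
            * (s * Finset.univ.sup fun i => (prems i).weight s) := by ring

/-- W(Π, r) ≤ r^{d(Π)} · W(Π, 1) for every r ≥ 1. -/
theorem sti_weight_le_pow_degree
    {Γ : Ctx} {M : Tm} {σ : ITy} (P : Der Γ M σ) (r : ℕ) (hr : 1 ≤ r) :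
    P.weight r ≤ r ^ P.degree * P.weight 1 := by
  simpa using P.weight_mul_le_pow_degree_mul hr 1
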